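/- Define the 8×8 real matrices J₁ = [[ρ, 0], [0, ρ]], J₂ = [[0, α], [α, 0]], J₃ = [[0, Ω], [Ω, 0]], where ρ = [[0, A], [A, 0]], α = [[A, 0], [0, −A]], Ω = [[0, I₂], [−I₂, 0]] are 4×4 matrices and A = [[0, −1], [1, 0]]. Then J₁ · J₂ · J₃ = −I₈; together with J₁² = J₂² = J₃² = −I₈ and the η-compatibility of each Jᵢ, the triple {J₁, J₂, J₃} forms a generalized hyper-complex structure. -/
import Mathlib


open Matrix

/-- The 2×2 block `A = [[0,−1],[1,0]]`. -/
def A2 : Matrix (Fin 2) (Fin 2) ℝ := !![0, -1; 1, 0]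

/-- The complex structure `ρ = [[0,A],[A,0]]`. -/
def ρm : Matrix (Fin 2 ⊕ Fin 2) (Fin 2 ⊕ Fin 2) ℝ := Matrix.fromBlocks 0 A2 A2 0

/-- The matrix `α = [[A,0],[0,−A]]` of the 2-form `dp∧dq − dx∧dy`. -/
def αm : Matrix (Fin 2 ⊕ Fin 2) (Fin 2 ⊕ Fin 2) ℝ := Matrix.fromBlocks A2 0 0 (-A2)

/-- The matrix `Ω = [[0,I₂],[−I₂,0]]` of the canonical symplectic form. -/
def Ωm : Matrix (Fin 2 ⊕ Fin 2) (Fin 2 ⊕ Fin 2) ℝ := Matrix.fromBlocks 0 1 (-1) 0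

/-- The matrix `η = [[0,I₄],[I₄,0]]` of the natural inner product on `𝕋M`. -/
def ηm : Matrix ((Fin 2 ⊕ Fin 2) ⊕ (Fin 2 ⊕ Fin 2)) ((Fin 2 ⊕ Fin 2) ⊕ (Fin 2 ⊕ Fin 2)) ℝ :=
  Matrix.fromBlocks 0 1 1 0

lemma hneg {n m : Type*} [DecidableEq n] [DecidableEq m] :
    (Matrix.fromBlocks (-1) 0 0 (-1) : Matrix (n ⊕ m) (n ⊕ m) ℝ) = -1 := by
  have : (Matrix.fromBlocks (-1) 0 0 (-1) : Matrix (n ⊕ m) (n ⊕ m) ℝ)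
      = Matrix.fromBlocks (-1) (-0) (-0) (-1) := by simp
  rw [this, ← Matrix.fromBlocks_neg, Matrix.fromBlocks_one]

lemma hA : A2 * A2 = -1 := by
  ext i j
  fin_cases i <;> fin_cases j <;>
    simp [A2, Matrix.mul_apply, Fin.sum_univ_succ, Matrix.one_apply]

lemma hAt : A2ᵀ * A2 = 1 := by
  ext i j
  fin_cases i <;> fin_cases j <;>
    simp [A2, Matrix.mul_apply, Fin.sum_univ_succ, Matrix.one_apply]

lemma hρρ : ρm * ρm = -1 := by
  rw [ρm, Matrix.fromBlocks_multiply]; simp [hA, hneg]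

lemma hαα : αm * αm = -1 := by
  rw [αm, Matrix.fromBlocks_multiply]; simp [hA, hneg]

lemma hΩΩ : Ωm * Ωm = -1 := by
  rw [Ωm, Matrix.fromBlocks_multiply]; simp [hneg]

lemma hρα : ρm * αm = Ωm := by
  rw [ρm, αm, Ωm, Matrix.fromBlocks_multiply]
  simp [hA]

lemma hρtρ : ρmᵀ * ρm = 1 := by
  rw [ρm, Matrix.fromBlocks_transpose, Matrix.fromBlocks_multiply]
  simp [hAt, Matrix.fromBlocks_one]

lemma hαtα : αmᵀ * αm = 1 := by
  rw [αm, Matrix.fromBlocks_transpose, Matrix.fromBlocks_multiply]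
  simp [hAt, Matrix.fromBlocks_one]

lemma hΩtΩ : Ωmᵀ * Ωm = 1 := by
  rw [Ωm, Matrix.fromBlocks_transpose, Matrix.fromBlocks_multiply]
  simp [Matrix.fromBlocks_one]

/-- The triple `{J₁, J₂, J₃}` (all sign parameters `= 1`) is a generalized
hyper-complex structure: `J₁J₂J₃ = −I₈`, each `Jᵢ² = −I₈`, and each `Jᵢ` is
`η`-compatible. -/
theorem generalized_hypercomplex
    (J₁ J₂ J₃ : Matrix ((Fin 2 ⊕ Fin 2) ⊕ (Fin 2 ⊕ Fin 2)) ((Fin 2 ⊕ Fin 2) ⊕ (Fin 2 ⊕ Fin 2)) ℝ)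
    (hJ₁ : J₁ = Matrix.fromBlocks ρm 0 0 ρm)
    (hJ₂ : J₂ = Matrix.fromBlocks 0 αm αm 0)
    (hJ₃ : J₃ = Matrix.fromBlocks 0 Ωm Ωm 0) :
    J₁ * J₂ * J₃ = -1 ∧
    J₁ * J₁ = -1 ∧ J₂ * J₂ = -1 ∧ J₃ * J₃ = -1 ∧
    J₁ᵀ * ηm * J₁ = ηm ∧ J₂ᵀ * ηm * J₂ = ηm ∧ J₃ᵀ * ηm * J₃ = ηm := by
  subst hJ₁ hJ₂ hJ₃
  refine ⟨?_, ?_, ?_, ?_, ?_, ?_, ?_⟩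
  · rw [Matrix.fromBlocks_multiply, Matrix.fromBlocks_multiply]
    simp [hρα, hΩΩ, hneg]
  · rw [Matrix.fromBlocks_multiply]; simp [hρρ, hneg]
  · rw [Matrix.fromBlocks_multiply]; simp [hαα, hneg]
  · rw [Matrix.fromBlocks_multiply]; simp [hΩΩ, hneg]
  · rw [ηm, Matrix.fromBlocks_transpose, Matrix.fromBlocks_multiply,
      Matrix.fromBlocks_multiply]
    simp [hρtρ]
  · rw [ηm, Matrix.fromBlocks_transpose, Matrix.fromBlocks_multiply,
      Matrix.fromBlocks_multiply]
    simp [hαtα]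
  · rw [ηm, Matrix.fromBlocks_transpose, Matrix.fromBlocks_multiply,
      Matrix.fromBlocks_multiply]
    simp [hΩtΩ]
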